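/- arXiv:2603.03025 — 6 statements merged into one kernel-verified Lean document; each statement's English description precedes it below -/
import Mathlib

section
/- Let T be a finite tree with independence number t, and let c_k = i_k(T) denote the coefficients of its independence polynomial. Then c_{⌈(2t−1)/3⌉} ≥ c_{⌈(2t−1)/3⌉+1} ≥ ... ≥ c_{t−1} ≥ c_t; that is, the last one-third of the coefficients of the independence polynomial of a tree are weakly decreasing. -/
/-- The number of independent sets of size `k` in a finite simple graph `G`
(an independent set is a finite set of pairwise nonadjacent vertices). -/
noncomputable def indepCount {V : Type} [Fintype V] (G : SimpleGraph V) (k : ℕ) : ℕ :=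
  Nat.card {s : Finset V // s.card = k ∧ ∀ u ∈ s, ∀ v ∈ s, ¬ G.Adj u v}

/-- The independence number of a finite simple graph `G`: the maximum size of an
independent set. -/
noncomputable def indepNum {V : Type} [Fintype V] (G : SimpleGraph V) : ℕ :=
  sSup {k | ∃ s : Finset V, s.card = k ∧ ∀ u ∈ s, ∀ v ∈ s, ¬ G.Adj u v}

/-!
A tree is bipartite. If `s` is an independent `k`-set, the vertices that can be added to `s` fall
into two colour classes, each of which together with `s` is independent, so there are at most
`2 (α - k)` of them. Counting pairs `B ⊆ A` of independent sets of sizes `k` and `k + 1` gives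
`(k + 1) i_{k+1} ≤ 2 (α - k) i_k`, and `2 (α - k) ≤ k + 1` in the last third.
-/

open Finset

namespace SimpleGraph

variable {V : Type} [Fintype V] [DecidableEq V] {G : SimpleGraph V} [DecidableRel G.Adj]

def indepExtensions (G : SimpleGraph V) [DecidableRel G.Adj] (s : Finset V) : Finset V :=
  {v | v ∉ s ∧ ∀ u ∈ s, ¬ G.Adj v u}

lemma IsIndepSet.card_add_card_filter_indepExtensions_le {β : Type} [DecidableEq β] {s : Finset V}
    (c : G.Coloring β) (hs : G.IsIndepSet (s : Set V)) (b : β) :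
    #s + #{v ∈ G.indepExtensions s | c v = b} ≤ G.indepNum := by
  set t := {v ∈ G.indepExtensions s | c v = b}
  have ht : ∀ v ∈ t, v ∉ s ∧ (∀ u ∈ s, ¬ G.Adj v u) ∧ c v = b := by
    intro v hv
    simp only [t, indepExtensions, mem_filter, mem_univ, true_and] at hv
    exact ⟨hv.1.1, hv.1.2, hv.2⟩
  have hdisj : Disjoint s t := disjoint_right.2 fun v hv => (ht v hv).1
  have hindep : G.IsIndepSet ((s ∪ t : Finset V) : Set V) := by
    rw [coe_union, IsIndepSet, Set.pairwise_union]
    refine ⟨hs, fun u hu v hv _ hadj => c.valid hadj ?_, fun u hu v hv _ => ?_⟩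
    · exact (ht u hu).2.2.trans (ht v hv).2.2.symm
    · exact ⟨fun h => (ht v hv).2.1 u hu h.symm, (ht v hv).2.1 u hu⟩
  rw [← card_union_of_disjoint hdisj]
  exact hindep.card_le_indepNum

lemma IsIndepSet.card_indepExtensions_le {n : ℕ} {s : Finset V} (hG : G.Colorable n)
    (hs : G.IsIndepSet (s : Set V)) :
    #(G.indepExtensions s) ≤ (G.indepNum - #s) * n := by
  obtain ⟨c⟩ := hG
  simpa using card_le_mul_card_image_of_maps_to (t := univ) (fun v _ => mem_univ (c v)) _
    fun b _ => Nat.le_sub_of_add_le' (hs.card_add_card_filter_indepExtensions_le c b)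

lemma card_filter_superset_le_card_indepExtensions (s : Finset V) :
    #{A ∈ G.indepSetFinset (#s + 1) | s ⊆ A} ≤ #(G.indepExtensions s) := by
  refine le_trans (card_le_card fun A hA => ?_) (card_image_le (f := (insert · s)))
  obtain ⟨⟨hA, hAcard⟩, hsA⟩ := by simpa using hA
  obtain ⟨v, hv⟩ : ∃ v, A \ s = {v} := card_eq_one.1 (by rw [card_sdiff_of_subset hsA]; omega)
  have hvA : v ∈ A ∧ v ∉ s := mem_sdiff.1 (hv ▸ mem_singleton_self v)
  have hA_eq : insert v s = A := by rw [← sdiff_union_of_subset hsA, hv, singleton_union]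
  refine mem_image.2 ⟨v, ?_, hA_eq⟩
  simp only [indepExtensions, mem_filter, mem_univ, true_and]
  exact ⟨hvA.2, fun u hu => hA hvA.1 (hsA hu) (ne_of_mem_of_not_mem hu hvA.2).symm⟩

lemma le_card_filter_subset_indepSetFinset {k : ℕ} {A : Finset V}
    (hA : A ∈ G.indepSetFinset (k + 1)) :
    k + 1 ≤ #{B ∈ G.indepSetFinset k | B ⊆ A} := by
  obtain ⟨hAindep, hAcard⟩ := mem_indepSetFinset_iff.1 hA
  calc k + 1 = #(A.powersetCard k) := by rw [card_powersetCard, hAcard, Nat.choose_succ_self_right]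
    _ ≤ _ := card_le_card fun B hB => by
      obtain ⟨hBA, hBcard⟩ := mem_powersetCard.1 hB
      exact mem_filter.2 ⟨mem_indepSetFinset_iff.2 ⟨hAindep.mono (coe_subset.2 hBA), hBcard⟩, hBA⟩

theorem Colorable.card_indepSetFinset_succ_mul_le {n : ℕ} (hG : G.Colorable n) (k : ℕ) :
    #(G.indepSetFinset (k + 1)) * (k + 1) ≤ #(G.indepSetFinset k) * ((G.indepNum - k) * n) :=
  card_mul_le_card_mul (fun A B : Finset V => B ⊆ A)
    (fun _ hA => le_card_filter_subset_indepSetFinset hA) fun s hs => by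
      obtain ⟨hsindep, rfl⟩ := mem_indepSetFinset_iff.1 hs
      exact (card_filter_superset_le_card_indepExtensions s).trans
        (hsindep.card_indepExtensions_le hG)

end SimpleGraph

lemma forall_mem_not_adj_iff_isIndepSet {V : Type} {G : SimpleGraph V} {s : Finset V} :
    (∀ u ∈ s, ∀ v ∈ s, ¬ G.Adj u v) ↔ G.IsIndepSet (s : Set V) :=
  ⟨fun h u hu v hv _ => h u hu v hv, fun h _ hu _ hv huv => h hu hv huv.ne huv⟩

lemma indepCount_eq_card_indepSetFinset {V : Type} [Fintype V] [DecidableEq V]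
    (G : SimpleGraph V) [DecidableRel G.Adj] (k : ℕ) :
    indepCount G k = #(G.indepSetFinset k) := by
  rw [indepCount, Nat.card_eq_fintype_card, Fintype.card_subtype]
  congr 1
  ext s
  simp [forall_mem_not_adj_iff_isIndepSet, SimpleGraph.isNIndepSet_iff, and_comm]

lemma indepNum_eq_indepNum {V : Type} [Fintype V] (G : SimpleGraph V) :
    indepNum G = G.indepNum := by
  simp only [indepNum, SimpleGraph.indepNum, forall_mem_not_adj_iff_isIndepSet,
    SimpleGraph.isNIndepSet_iff, and_comm]

/-- For a finite tree `T` with independence number `t` and independence polynomial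
coefficients `c_k = i_k(T)`, the last one-third of the coefficients are weakly
decreasing: `c_{⌈(2t-1)/3⌉} ≥ ⋯ ≥ c_{t-1} ≥ c_t`.  (Note that for `t ≥ 1` one has
`⌈(2t-1)/3⌉ = (2t+1)/3` with natural-number division.) -/
theorem tree_indepCount_decreasing_last_third {V : Type} [Fintype V]
    (T : SimpleGraph V) (hT : T.IsTree) :
    ∀ j : ℕ, (2 * indepNum T + 1) / 3 ≤ j → j < indepNum T →
      indepCount T (j + 1) ≤ indepCount T j := by
  classical
  intro j hj _
  rw [indepNum_eq_indepNum] at hj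
  rw [indepCount_eq_card_indepSetFinset, indepCount_eq_card_indepSetFinset]
  refine Nat.le_of_mul_le_mul_right ((hT.isBipartite.card_indepSetFinset_succ_mul_le j).trans ?_)
    j.succ_pos
  exact Nat.mul_le_mul_left _ (by omega)
end

section
/- For any integers n ≥ k ≥ 0 and any subset S ⊆ {1, ..., k}, the map φ_S is a bijection from the set A_k onto the set x^k_{S,n}. -/
/-- Vertices of the spider `S(2ⁿ)`: a center `v₀` together with legs `vᵢ` and
leg-tips `v'ᵢ` for `1 ≤ i ≤ n`. -/
inductive SpiderV (n : ℕ) : Type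
  | center : SpiderV n
  | leg : Fin n → SpiderV n
  | tip : Fin n → SpiderV n
  deriving DecidableEq, Fintype

/-- The set of indices `i` with `α(vᵢ) = 1` and `α(v'ᵢ) = 0`. -/
def suppA (n : ℕ) (α : SpiderV n → ℕ) : Finset (Fin n) :=
  Finset.univ.filter fun i => α (.leg i) = 1 ∧ α (.tip i) = 0

/-- `α ∈ 𝒜_k`: maps `α : V(S(2ⁿ)) → ℕ` with `α(v₀) = 1`, `α(vᵢ) ≤ 1` and
`α(vᵢ) + α(v'ᵢ) ≤ 2` for all `i`, and `#{i : α(vᵢ) = 1, α(v'ᵢ) = 0} = k`. -/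
def memA (n k : ℕ) (α : SpiderV n → ℕ) : Prop :=
  α .center = 1 ∧ (∀ i : Fin n, α (.leg i) ≤ 1 ∧ α (.leg i) + α (.tip i) ≤ 2) ∧
    (suppA n α).card = k

/-- The map `φ_S`: writing `{i : α(vᵢ) = 1, α(v'ᵢ) = 0} = {i₁ < i₂ < ⋯ < i_k}`,
`φ_S(α)` sends `v_{i_j} ↦ 2` for `j ∈ S` (positions are 1-indexed), `v₀ ↦ 0`, and
agrees with `α` on all other vertices. -/
def phi (n : ℕ) (S : Finset ℕ) (α : SpiderV n → ℕ) : SpiderV n → ℕ :=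
  fun v =>
    match v with
    | .center => 0
    | .leg i =>
        if i ∈ suppA n α ∧ ((suppA n α).sort (· ≤ ·)).idxOf i + 1 ∈ S then 2
        else α (.leg i)
    | .tip i => α (.tip i)

/-- The set of indices `i` with `α(vᵢ) ≥ 1` and `α(v'ᵢ) = 0`. -/
def suppX (n : ℕ) (α : SpiderV n → ℕ) : Finset (Fin n) :=
  Finset.univ.filter fun i => 1 ≤ α (.leg i) ∧ α (.tip i) = 0

/-- `α ∈ x^t_{S,n}`: maps `α : V(S(2ⁿ)) → ℕ` with `α(v₀) = 0`,
`α(vᵢ) + α(v'ᵢ) ≤ 2` for all `i`, such that `T = {i : α(vᵢ) ≥ 1, α(v'ᵢ) = 0}` has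
exactly `t` elements, and writing `T = {k₁ < ⋯ < k_t}` one has `α(v_{k_j}) = 2` if
`j ∈ S` and `α(v_{k_j}) = 1` otherwise (positions `j` are 1-indexed). -/
def memX (n : ℕ) (S : Finset ℕ) (t : ℕ) (α : SpiderV n → ℕ) : Prop :=
  α .center = 0 ∧ (∀ i : Fin n, α (.leg i) + α (.tip i) ≤ 2) ∧
    (suppX n α).card = t ∧
    ∀ i ∈ suppX n α,
      α (.leg i) = if ((suppX n α).sort (· ≤ ·)).idxOf i + 1 ∈ S then 2 else 1

/-! On `𝒜_k` the index set `T = {i : α(vᵢ) ≥ 1, α(v'ᵢ) = 0}` is `{i : α(vᵢ) = 1, α(v'ᵢ) = 0}`,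
and `φ_S` only raises some of those legs from `1` to `2`; so `φ_S` does not change `T`, nor the
positions `j` in its increasing enumeration. Hence the map `phiInv` that resets every leg of `T`
to `1` and the center to `1` inverts `φ_S`. -/

section Spider

variable {n : ℕ} {S : Finset ℕ} {α β : SpiderV n → ℕ} {i : Fin n}

@[simp]
lemma mem_suppA : i ∈ suppA n α ↔ α (.leg i) = 1 ∧ α (.tip i) = 0 := by
  simp [suppA]

@[simp]
lemma mem_suppX : i ∈ suppX n α ↔ 1 ≤ α (.leg i) ∧ α (.tip i) = 0 := by
  simp [suppX]

@[simp]
lemma phi_tip : phi n S α (.tip i) = α (.tip i) := rfl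

lemma phi_leg_of_mem (hi : i ∈ suppA n α) :
    phi n S α (.leg i) = if ((suppA n α).sort (· ≤ ·)).idxOf i + 1 ∈ S then 2 else 1 := by
  simp only [phi, hi, true_and]
  split_ifs <;> simp_all

lemma phi_leg_of_not_mem (hi : i ∉ suppA n α) : phi n S α (.leg i) = α (.leg i) := by
  simp [phi, hi]

lemma suppX_phi (hle : ∀ i, α (.leg i) ≤ 1) : suppX n (phi n S α) = suppA n α := by
  ext i
  by_cases hi : i ∈ suppA n α
  · have hphi := phi_leg_of_mem (S := S) hi
    simp only [mem_suppX, phi_tip, hphi, hi, iff_true, (mem_suppA.mp hi).2, and_true]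
    split_ifs <;> simp
  · have := hle i
    simp only [mem_suppX, phi_tip, phi_leg_of_not_mem hi, mem_suppA]
    omega

lemma memX_phi {k : ℕ} (hα : memA n k α) : memX n S k (phi n S α) := by
  obtain ⟨-, hle, hcard⟩ := hα
  have hsupp := suppX_phi (S := S) fun i => (hle i).1
  refine ⟨rfl, fun i => ?_, hsupp ▸ hcard, fun i hi => ?_⟩
  · by_cases hi : i ∈ suppA n α
    · rw [phi_leg_of_mem hi, phi_tip, (mem_suppA.mp hi).2]
      split_ifs <;> simp
    · rw [phi_leg_of_not_mem hi]
      exact (hle i).2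
  · rw [hsupp] at hi ⊢
    exact phi_leg_of_mem hi

def phiInv (n : ℕ) (β : SpiderV n → ℕ) : SpiderV n → ℕ
  | .center => 1
  | .leg i => if i ∈ suppX n β then 1 else β (.leg i)
  | .tip i => β (.tip i)

lemma phiInv_leg_of_mem (hi : i ∈ suppX n β) : phiInv n β (.leg i) = 1 := by
  simp [phiInv, hi]

lemma phiInv_leg_of_not_mem (hi : i ∉ suppX n β) : phiInv n β (.leg i) = β (.leg i) := by
  simp [phiInv, hi]

@[simp]
lemma phiInv_tip : phiInv n β (.tip i) = β (.tip i) := rfl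

lemma suppA_phiInv : suppA n (phiInv n β) = suppX n β := by
  ext i
  by_cases hi : i ∈ suppX n β
  · simp [phiInv_leg_of_mem hi, (mem_suppX.mp hi).2, hi]
  · simp only [mem_suppA, phiInv_tip, phiInv_leg_of_not_mem hi, hi, iff_false]
    simp only [mem_suppX, not_and] at hi
    omega

lemma memA_phiInv {k : ℕ} (hβ : memX n S k β) : memA n k (phiInv n β) := by
  obtain ⟨-, hsum, hcard, -⟩ := hβ
  refine ⟨rfl, fun i => ?_, suppA_phiInv ▸ hcard⟩
  have := hsum i
  by_cases hi : i ∈ suppX n β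
  · simp [phiInv_leg_of_mem hi, (mem_suppX.mp hi).2]
  · rw [phiInv_leg_of_not_mem hi, phiInv_tip]
    simp only [mem_suppX, not_and] at hi
    omega

lemma phiInv_phi (hc : α .center = 1) (hle : ∀ i, α (.leg i) ≤ 1) :
    phiInv n (phi n S α) = α := by
  funext v
  cases v with
  | center => exact hc.symm
  | tip i => rfl
  | leg i =>
    by_cases hi : i ∈ suppA n α
    · rw [phiInv_leg_of_mem (suppX_phi hle ▸ hi), (mem_suppA.mp hi).1]
    · rw [phiInv_leg_of_not_mem (suppX_phi hle ▸ hi), phi_leg_of_not_mem hi]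

lemma phi_phiInv (hc : β .center = 0)
    (hval : ∀ i ∈ suppX n β,
      β (.leg i) = if ((suppX n β).sort (· ≤ ·)).idxOf i + 1 ∈ S then 2 else 1) :
    phi n S (phiInv n β) = β := by
  funext v
  cases v with
  | center => exact hc.symm
  | tip i => rfl
  | leg i =>
    by_cases hi : i ∈ suppX n β
    · rw [phi_leg_of_mem (suppA_phiInv ▸ hi), suppA_phiInv, hval i hi]
    · rw [phi_leg_of_not_mem (suppA_phiInv ▸ hi), phiInv_leg_of_not_mem hi]

end Spider

theorem phi_bijOn_general (n k : ℕ) (S : Finset ℕ) :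
    Set.BijOn (phi n S) {α | memA n k α} {α | memX n S k α} :=
  Set.InvOn.bijOn (f' := phiInv n)
    ⟨fun _ hα => phiInv_phi hα.1 fun i => (hα.2.1 i).1,
      fun _ hβ => phi_phiInv hβ.1 hβ.2.2.2⟩
    (fun _ => memX_phi) (fun _ => memA_phiInv)

/-- For `n ≥ k ≥ 0` and `S ⊆ {1, …, k}`, the map `φ_S` is a bijection from `𝒜_k`
onto `x^k_{S,n}`. -/
theorem phi_bijOn (n k : ℕ) (hkn : k ≤ n) (S : Finset ℕ) (hS : S ⊆ Finset.Icc 1 k) :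
    Set.BijOn (phi n S) {α | memA n k α} {α | memX n S k α} :=
  phi_bijOn_general n k S
end

section
/- Let S_1, S_2 ⊆ {1, ..., n} with S_1 ≠ S_2. Then for any integers t_1, t_2 with max S_1 ≤ t_1 ≤ n and max S_2 ≤ t_2 ≤ n, the sets x^{t_1}_{S_1,n} and x^{t_2}_{S_2,n} are disjoint; consequently the unions x_{S_1,n} = ∪_{t} x^t_{S_1,n} and x_{S_2,n} = ∪_{t} x^t_{S_2,n} are disjoint. -/
theorem Finset.exists_idxOf_sort_add_one_eq {ι : Type*} [LinearOrder ι] (T : Finset ι)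
    {s : ℕ} (hs₀ : 1 ≤ s) (hs : s ≤ T.card) :
    ∃ i ∈ T, (T.sort (· ≤ ·)).idxOf i + 1 = s := by
  have hlt : s - 1 < (T.sort (· ≤ ·)).length := by rw [Finset.length_sort]; omega
  refine ⟨(T.sort (· ≤ ·)).get ⟨s - 1, hlt⟩, (Finset.mem_sort _).mp (List.get_mem _ _), ?_⟩
  rw [List.get_idxOf (Finset.sort_nodup _ _), Fin.val_mk]
  omega

/-- Both labellings live on the same support `suppX n α`: its `s`-th element carries the value
`2`, which the second labelling allows only when `s ∈ S'`. -/
theorem memX.mem_of_memX {n t t' : ℕ} {S S' : Finset ℕ} {α : SpiderV n → ℕ}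
    (h : memX n S t α) (h' : memX n S' t' α) {s : ℕ} (hs₀ : 1 ≤ s) (hst : s ≤ t)
    (hs : s ∈ S) : s ∈ S' := by
  obtain ⟨-, -, hcard, hval⟩ := h
  obtain ⟨-, -, -, hval'⟩ := h'
  obtain ⟨i, hi, hpos⟩ := (suppX n α).exists_idxOf_sort_add_one_eq hs₀ (hcard ▸ hst)
  have htwo := hval i hi
  have hval'i := hval' i hi
  rw [hpos, if_pos hs] at htwo
  by_contra hs'
  rw [hpos, htwo, if_neg hs'] at hval'i
  exact absurd hval'i (by decide)

theorem memX_disjoint_general (n : ℕ) (S₁ S₂ : Finset ℕ)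
    (hS₁ : S₁ ⊆ Finset.Icc 1 n) (hS₂ : S₂ ⊆ Finset.Icc 1 n) (hne : S₁ ≠ S₂)
    (t₁ t₂ : ℕ) (ht₁ : ∀ s ∈ S₁, s ≤ t₁)
    (ht₂ : ∀ s ∈ S₂, s ≤ t₂) (α : SpiderV n → ℕ) :
    ¬ (memX n S₁ t₁ α ∧ memX n S₂ t₂ α) := by
  rintro ⟨h₁, h₂⟩
  refine hne (Finset.ext fun s => ⟨fun hs => ?_, fun hs => ?_⟩)
  · exact h₁.mem_of_memX h₂ (Finset.mem_Icc.mp (hS₁ hs)).1 (ht₁ s hs) hs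
  · exact h₂.mem_of_memX h₁ (Finset.mem_Icc.mp (hS₂ hs)).1 (ht₂ s hs) hs

/-- For `S₁ ≠ S₂` with `S₁, S₂ ⊆ {1, …, n}`, and any `t₁, t₂` with
`max S₁ ≤ t₁ ≤ n` and `max S₂ ≤ t₂ ≤ n`, the sets `x^{t₁}_{S₁,n}` and
`x^{t₂}_{S₂,n}` are disjoint; consequently so are the unions `x_{S₁,n}` and
`x_{S₂,n}`. -/
theorem memX_disjoint (n : ℕ) (S₁ S₂ : Finset ℕ)
    (hS₁ : S₁ ⊆ Finset.Icc 1 n) (hS₂ : S₂ ⊆ Finset.Icc 1 n) (hne : S₁ ≠ S₂)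
    (t₁ t₂ : ℕ) (ht₁ : ∀ s ∈ S₁, s ≤ t₁) (ht₁n : t₁ ≤ n)
    (ht₂ : ∀ s ∈ S₂, s ≤ t₂) (ht₂n : t₂ ≤ n) (α : SpiderV n → ℕ) :
    ¬ (memX n S₁ t₁ α ∧ memX n S₂ t₂ α) :=
  memX_disjoint_general n S₁ S₂ hS₁ hS₂ hne t₁ t₂ ht₁ ht₂ α
end

section
/- Let k ≥ 3 and r ≥ 0 be integers, and let X(x_1,x_2) be the two-variable chromatic symmetric function of the spider S(1^k,2^r) (i.e., X_G^α with α ≡ 1 and G = S(1^k,2^r)). Then c_{(r+k,r+1)}(X) = 1, c_{(r+k−1,r+2)}(X) = −1, and c_{(a,b)}(X) = 0 for all other pairs a ≥ b ≥ 0. Moreover, if H is the graph consisting of r+1 disjoint edges together with k−1 isolated vertices, then its two-variable chromatic symmetric function X_H satisfies c_{(r+k,r+1)}(X_H) ≥ 2^{r+1}, c_{(r+k−1,r+2)}(X_H) ≥ 2^{r+1}, and c_{(a,b)}(X_H) ≥ 0 for all a ≥ b ≥ 0. -/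
/-!
A proper 2-coloring of a connected bipartite graph is fixed by the color of one vertex, so the
spider has exactly two of them and `X = x₁^{r+1} x₂^{k+r} + x₁^{k+r} x₂^{r+1}`; as `k ≥ 3` the two
exponents differ by at least 2, and this is `s_{(r+k,r+1)} − s_{(r+k−1,r+2)}`.
In `H` every edge contributes `2 x₁ x₂` and every isolated vertex `x₁ + x₂`, so
`X_H = 2^{r+1} (x₁x₂)^{r+1} (x₁+x₂)^{k−1}`. The coefficient of `s_{(m+n−j,m+j)}` in
`(x₁x₂)^m (x₁+x₂)^n` is `C(n,j) − C(n,j−1)`, which is nonnegative for `j ≤ n/2` by unimodality of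
the binomial coefficients.
-/

/-- A proper multicoloring of type `α` with colors in `{1,2}` (here `Fin 2`): each
vertex `v` gets a set `κ v` of colors with `|κ v| = α v`, and adjacent vertices get
disjoint color sets. -/
def ProperMulti {V : Type} (G : SimpleGraph V) (α : V → ℕ)
    (κ : V → Finset (Fin 2)) : Prop :=
  (∀ v, (κ v).card = α v) ∧ ∀ u v, G.Adj u v → κ u ∩ κ v = ∅

/-- The two-variable polynomial `X_G^α(x₁,x₂) = Σ_κ x₁^{a₁(κ)} x₂^{a₂(κ)}`, summed
over all proper multicolorings `κ` of type `α` with colors in `{1,2}`, where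
`a_i(κ)` is the number of vertices whose color set contains `i`.  (This is the
two-variable specialization of Stanley's normalized chromatic symmetric function.) -/
noncomputable def Xpoly {V : Type} [Fintype V] (G : SimpleGraph V) (α : V → ℕ) :
    MvPolynomial (Fin 2) ℤ :=
  ∑ᶠ κ : {κ : V → Finset (Fin 2) // ProperMulti G α κ},
    (MvPolynomial.X 0) ^ (Finset.univ.filter fun v => (0 : Fin 2) ∈ κ.1 v).card *
      (MvPolynomial.X 1) ^ (Finset.univ.filter fun v => (1 : Fin 2) ∈ κ.1 v).card

/-- The two-row Schur coefficient `c_{(k,l)}(f) = [x₁^k x₂^l] f − [x₁^{k+1} x₂^{l-1}] f`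
of a polynomial in two variables, the second term being read as `0` when `l = 0`. -/
noncomputable def schurCoeff (f : MvPolynomial (Fin 2) ℤ) (k l : ℕ) : ℤ :=
  MvPolynomial.coeff (Finsupp.single 0 k + Finsupp.single 1 l) f -
    if l = 0 then 0
    else MvPolynomial.coeff (Finsupp.single 0 (k + 1) + Finsupp.single 1 (l - 1)) f

/-- A polynomial in two variables is 2-s-positive if all its two-row Schur
coefficients `c_{(k,l)}`, for `k ≥ l ≥ 0`, are nonnegative. -/
def TwoSPos (f : MvPolynomial (Fin 2) ℤ) : Prop :=
  ∀ k l : ℕ, l ≤ k → 0 ≤ schurCoeff f k l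

/-- Vertices of the spider `S(1ᵏ,2ʳ)`: a center adjacent to `k` leaves and to `r`
legs of length 2 (with middle vertices `mid i` and endpoints `tip i`). -/
inductive SpKRV (k r : ℕ) : Type
  | center : SpKRV k r
  | leaf : Fin k → SpKRV k r
  | mid : Fin r → SpKRV k r
  | tip : Fin r → SpKRV k r
  deriving DecidableEq, Fintype

/-- The edge relation of the spider `S(1ᵏ,2ʳ)`. -/
inductive SpKRRel (k r : ℕ) : SpKRV k r → SpKRV k r → Prop
  | cl (i : Fin k) : SpKRRel k r .center (.leaf i)
  | cm (i : Fin r) : SpKRRel k r .center (.mid i)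
  | mt (i : Fin r) : SpKRRel k r (.mid i) (.tip i)

/-- The spider `S(1ᵏ,2ʳ)` as a simple graph. -/
def spiderKR (k r : ℕ) : SimpleGraph (SpKRV k r) := SimpleGraph.fromRel (SpKRRel k r)

/-- Vertices of the graph consisting of `r+1` disjoint edges (with endpoints `e0 i`
and `e1 i`) together with `k-1` isolated vertices. -/
inductive MatchV (k r : ℕ) : Type
  | e0 : Fin (r + 1) → MatchV k r
  | e1 : Fin (r + 1) → MatchV k r
  | iso : Fin (k - 1) → MatchV k r
  deriving DecidableEq, Fintype

/-- The edge relation of the matching-plus-isolated-vertices graph. -/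
inductive MatchRel (k r : ℕ) : MatchV k r → MatchV k r → Prop
  | e (i : Fin (r + 1)) : MatchRel k r (.e0 i) (.e1 i)

/-- The graph of `r+1` disjoint edges together with `k-1` isolated vertices. -/
def matchGraph (k r : ℕ) : SimpleGraph (MatchV k r) := SimpleGraph.fromRel (MatchRel k r)


open MvPolynomial

lemma Fin.two_ne_add_one : ∀ a : Fin 2, a ≠ a + 1 := by decide

lemma Fin.two_add_one_add_one : ∀ a : Fin 2, a + 1 + 1 = a := by decide

lemma SimpleGraph.Coloring.fin_two_eq_add_one {V : Type*} {G : SimpleGraph V}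
    (C : G.Coloring (Fin 2)) {u v : V} (h : G.Adj u v) : C v = C u + 1 := by
  have hne := C.valid h
  generalize C u = a at hne ⊢
  generalize C v = b at hne ⊢
  revert a b
  decide

lemma X_mul_X_add_one {R : Type*} [CommSemiring R] (a : Fin 2) :
    (X a * X (a + 1) : MvPolynomial (Fin 2) R) = X 0 * X 1 := by
  fin_cases a
  · rfl
  · exact mul_comm _ _

lemma Xpoly_one_eq_sum_coloring {V : Type} [Fintype V] (G : SimpleGraph V) :
    Xpoly G (fun _ => 1) = ∑ C : G.Coloring (Fin 2), ∏ v, X (C v) := by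
  let toProper (C : G.Coloring (Fin 2)) : {κ // ProperMulti G (fun _ => 1) κ} :=
    ⟨fun v => {C v}, fun _ => Finset.card_singleton _, fun _ _ h =>
      Finset.disjoint_iff_inter_eq_empty.mp (Finset.disjoint_singleton.mpr (C.valid h))⟩
  have hbij : Function.Bijective toProper := by
    refine ⟨fun C C' h => ?_, fun ⟨κ, hcard, hdisj⟩ => ?_⟩
    · refine DFunLike.ext _ _ fun v => ?_
      simpa [toProper] using congrFun (congrArg Subtype.val h) v
    · choose c hc using fun v => Finset.card_eq_one.mp (hcard v)
      refine ⟨SimpleGraph.Coloring.mk c fun {u v} h hcv => ?_, Subtype.ext (funext hc).symm⟩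
      simpa [hc, hcv] using hdisj u v h
  rw [Xpoly, ← finsum_comp_equiv (Equiv.ofBijective _ hbij), finsum_eq_sum_of_fintype]
  refine Finset.sum_congr rfl fun C _ => ?_
  rw [← Finset.prod_fiberwise' Finset.univ C X, Fin.prod_univ_two]
  simp [toProper, eq_comm]

section TwoVariables

variable {R : Type*} [CommSemiring R]

lemma coeff_X_pow_mul_X_pow (p q a b : ℕ) :
    coeff (Finsupp.single 0 a + Finsupp.single 1 b)
        (X 0 ^ p * X 1 ^ q : MvPolynomial (Fin 2) R) = if p = a ∧ q = b then 1 else 0 := by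
  rw [X_pow_eq_monomial, X_pow_eq_monomial, monomial_mul, one_mul, coeff_monomial]
  simp [Finsupp.ext_iff, Fin.forall_fin_two]

lemma coeff_X_mul_X_pow_mul_X_add_X_pow (m n a b : ℕ) :
    coeff (Finsupp.single 0 a + Finsupp.single 1 b)
        ((X 0 * X 1) ^ m * (X 0 + X 1) ^ n : MvPolynomial (Fin 2) R) =
      if m ≤ a ∧ m ≤ b ∧ a + b = 2 * m + n then (n.choose (a - m) : R) else 0 := by
  have hterm : ∀ j, (X 0 * X 1) ^ m *
      (X 0 ^ j * X 1 ^ (n - j) * (n.choose j : MvPolynomial (Fin 2) R)) =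
        n.choose j • (X 0 ^ (m + j) * X 1 ^ (m + (n - j))) := fun j => by
    rw [nsmul_eq_mul]; ring
  simp only [add_pow, Finset.mul_sum, hterm, coeff_sum, coeff_smul, coeff_X_pow_mul_X_pow]
  simp only [smul_ite, nsmul_eq_mul, mul_one, mul_zero]
  rw [Finset.sum_eq_single (a - m)]
  · split_ifs <;> first | rfl | omega | simp [Nat.choose_eq_zero_of_lt (by omega : n < a - m)]
  · intro j _ hj
    rw [if_neg (by omega)]
  · intro hj
    rw [Finset.mem_range] at hj
    simp [Nat.choose_eq_zero_of_lt (by omega : n < a - m)]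

end TwoVariables

lemma Nat.choose_succ_le_of_le_two_mul {n j : ℕ} (h : n ≤ 2 * j) :
    n.choose (j + 1) ≤ n.choose j := by
  refine Nat.le_of_mul_le_mul_right ?_ (Nat.succ_pos j)
  rw [Nat.choose_succ_right_eq]
  exact Nat.mul_le_mul_left _ (by omega)

lemma schurCoeff_nsmul (c : ℕ) (f : MvPolynomial (Fin 2) ℤ) (a b : ℕ) :
    schurCoeff (c • f) a b = c • schurCoeff f a b := by
  simp only [schurCoeff, coeff_smul, smul_sub, smul_ite, smul_zero]

lemma TwoSPos.nsmul {f : MvPolynomial (Fin 2) ℤ} (hf : TwoSPos f) (c : ℕ) : TwoSPos (c • f) :=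
  fun a b hba => by rw [schurCoeff_nsmul]; exact nsmul_nonneg (hf a b hba) c

lemma schurCoeff_X_pow_mul_X_pow_add_swap {p q a b : ℕ} (hpq : p + 2 ≤ q) (hba : b ≤ a) :
    schurCoeff (X 0 ^ p * X 1 ^ q + X 0 ^ q * X 1 ^ p) a b =
      (if a = q ∧ b = p then 1 else 0) - if a + 1 = q ∧ b = p + 1 then 1 else 0 := by
  simp only [schurCoeff, coeff_add, coeff_X_pow_mul_X_pow]
  split_ifs <;> omega

/-- With `j = b - m` this is `C(n, j) - C(n, j - 1)` read through `C(n, i) = C(n, n - i)`, which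
avoids the truncated `j - 1` at `j = 0`. -/
lemma schurCoeff_X_mul_X_pow_mul_X_add_X_pow {m n a b : ℕ} (hba : b ≤ a) :
    schurCoeff ((X 0 * X 1) ^ m * (X 0 + X 1) ^ n) a b =
      if m ≤ b ∧ a + b = 2 * m + n then
        (n.choose (a - m) : ℤ) - n.choose (a - m + 1) else 0 := by
  simp only [schurCoeff, coeff_X_mul_X_pow_mul_X_add_X_pow]
  split_ifs <;> first
    | omega
    | rw [show a + 1 - m = a - m + 1 by omega]
    | simp [Nat.choose_eq_zero_of_lt (show n < a - m + 1 by omega)]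

lemma twoSPos_X_mul_X_pow_mul_X_add_X_pow (m n : ℕ) :
    TwoSPos ((X 0 * X 1) ^ m * (X 0 + X 1) ^ n) := fun a b hba => by
  rw [schurCoeff_X_mul_X_pow_mul_X_add_X_pow hba]
  split_ifs
  · exact sub_nonneg.mpr (by exact_mod_cast Nat.choose_succ_le_of_le_two_mul (by omega))
  · rfl

namespace SpKRV

variable {k r : ℕ}

def equivOption : SpKRV k r ≃ Option (Fin k ⊕ Fin r ⊕ Fin r) where
  toFun
    | center => none
    | leaf i => some (.inl i)
    | mid i => some (.inr (.inl i))
    | tip i => some (.inr (.inr i))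
  invFun
    | none => center
    | some (.inl i) => leaf i
    | some (.inr (.inl i)) => mid i
    | some (.inr (.inr i)) => tip i
  left_inv v := by cases v <;> rfl
  right_inv x := by rcases x with _ | i | i | i <;> rfl

lemma prod_univ {M : Type*} [CommMonoid M] (f : SpKRV k r → M) :
    ∏ v, f v = f center * (∏ i, f (leaf i)) * (∏ i, f (mid i)) * ∏ i, f (tip i) := by
  rw [← equivOption.symm.prod_comp]
  simp [Fintype.prod_option, Fintype.prod_sum_type, equivOption, mul_assoc]

def twoColor (b : Fin 2) : SpKRV k r → Fin 2
  | center => b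
  | leaf _ => b + 1
  | mid _ => b + 1
  | tip _ => b

lemma prod_X_twoColor {R : Type*} [CommSemiring R] (b : Fin 2) :
    ∏ v, (X (twoColor (k := k) (r := r) b v) : MvPolynomial (Fin 2) R) =
      X b ^ (r + 1) * X (b + 1) ^ (k + r) := by
  simp only [prod_univ, twoColor, Finset.prod_const, Finset.card_univ, Fintype.card_fin]
  ring

end SpKRV

lemma spiderKR_adj_of_rel {k r : ℕ} {u v : SpKRV k r} (h : SpKRRel k r u v) :
    (spiderKR k r).Adj u v :=
  SimpleGraph.fromRel_adj _ _ _ |>.mpr ⟨by cases h <;> simp, .inl h⟩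

def spiderColoring (k r : ℕ) (b : Fin 2) : (spiderKR k r).Coloring (Fin 2) :=
  SimpleGraph.Coloring.mk (SpKRV.twoColor b) fun h => by
    obtain ⟨-, h | h⟩ := (SimpleGraph.fromRel_adj _ _ _).mp h <;> cases h <;>
      simp [SpKRV.twoColor, (Fin.two_ne_add_one b).symm]

def spiderColoringEquiv (k r : ℕ) : Fin 2 ≃ (spiderKR k r).Coloring (Fin 2) where
  toFun := spiderColoring k r
  invFun C := C .center
  left_inv _ := rfl
  right_inv C := by
    refine DFunLike.ext _ _ fun v => ?_
    cases v with
    | center => rfl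
    | leaf i => exact (C.fin_two_eq_add_one (spiderKR_adj_of_rel (.cl i))).symm
    | mid i => exact (C.fin_two_eq_add_one (spiderKR_adj_of_rel (.cm i))).symm
    | tip i =>
      rw [C.fin_two_eq_add_one (spiderKR_adj_of_rel (.mt i)),
        C.fin_two_eq_add_one (spiderKR_adj_of_rel (.cm i)), Fin.two_add_one_add_one]
      rfl

lemma Xpoly_spiderKR (k r : ℕ) :
    Xpoly (spiderKR k r) (fun _ => 1) =
      X 0 ^ (r + 1) * X 1 ^ (k + r) + X 0 ^ (k + r) * X 1 ^ (r + 1) := by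
  rw [Xpoly_one_eq_sum_coloring, ← Fintype.sum_equiv (spiderColoringEquiv k r) _ _
    fun b => (SpKRV.prod_X_twoColor b).symm, Fin.sum_univ_two]
  simp only [zero_add, Fin.reduceAdd]
  ring

namespace MatchV

variable {k r : ℕ}

def equivSum : MatchV k r ≃ (Fin (r + 1) ⊕ Fin (r + 1)) ⊕ Fin (k - 1) where
  toFun
    | e0 i => .inl (.inl i)
    | e1 i => .inl (.inr i)
    | iso j => .inr j
  invFun
    | .inl (.inl i) => e0 i
    | .inl (.inr i) => e1 i
    | .inr j => iso j
  left_inv v := by cases v <;> rfl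
  right_inv x := by rcases x with (i | i) | j <;> rfl

lemma prod_univ {M : Type*} [CommMonoid M] (f : MatchV k r → M) :
    ∏ v, f v = (∏ i, f (e0 i)) * (∏ i, f (e1 i)) * ∏ j, f (iso j) := by
  rw [← equivSum.symm.prod_comp]
  simp [Fintype.prod_sum_type, equivSum]

def twoColor (s : Fin (r + 1) → Fin 2) (t : Fin (k - 1) → Fin 2) : MatchV k r → Fin 2
  | e0 i => s i
  | e1 i => s i + 1
  | iso j => t j

lemma prod_X_twoColor {R : Type*} [CommSemiring R] (s : Fin (r + 1) → Fin 2)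
    (t : Fin (k - 1) → Fin 2) :
    ∏ v, (X (twoColor s t v) : MvPolynomial (Fin 2) R) =
      (X 0 * X 1) ^ (r + 1) * ∏ j, X (t j) := by
  simp only [prod_univ, twoColor, ← Finset.prod_mul_distrib, X_mul_X_add_one,
    Finset.prod_const, Finset.card_univ, Fintype.card_fin]

end MatchV

lemma matchGraph_adj {k r : ℕ} (i : Fin (r + 1)) : (matchGraph k r).Adj (.e0 i) (.e1 i) :=
  SimpleGraph.fromRel_adj _ _ _ |>.mpr ⟨by simp, .inl (.e i)⟩

def matchColoring (k r : ℕ) (p : (Fin (r + 1) → Fin 2) × (Fin (k - 1) → Fin 2)) :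
    (matchGraph k r).Coloring (Fin 2) :=
  SimpleGraph.Coloring.mk (MatchV.twoColor p.1 p.2) fun h => by
    obtain ⟨-, h | h⟩ := (SimpleGraph.fromRel_adj _ _ _).mp h <;> cases h <;>
      simp [MatchV.twoColor, (Fin.two_ne_add_one _).symm]

def matchColoringEquiv (k r : ℕ) :
    (Fin (r + 1) → Fin 2) × (Fin (k - 1) → Fin 2) ≃ (matchGraph k r).Coloring (Fin 2) where
  toFun := matchColoring k r
  invFun C := (fun i => C (.e0 i), fun j => C (.iso j))
  left_inv _ := rfl
  right_inv C := by
    refine DFunLike.ext _ _ fun v => ?_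
    cases v with
    | e0 i => rfl
    | e1 i => exact (C.fin_two_eq_add_one (matchGraph_adj i)).symm
    | iso j => rfl

lemma Xpoly_matchGraph (k r : ℕ) :
    Xpoly (matchGraph k r) (fun _ => 1) =
      2 ^ (r + 1) • ((X 0 * X 1) ^ (r + 1) * (X 0 + X 1) ^ (k - 1)) := by
  rw [Xpoly_one_eq_sum_coloring, ← Fintype.sum_equiv (matchColoringEquiv k r) _ _
    fun p => (MatchV.prod_X_twoColor p.1 p.2).symm, Fintype.sum_prod_type]
  simp only [← Finset.mul_sum, ← Fintype.prod_sum, Fin.sum_univ_two, Finset.prod_const,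
    Finset.sum_const, Finset.card_univ, Fintype.card_fin, Fintype.card_fun, mul_smul_comm]

lemma schurCoeff_Xpoly_spiderKR {k r a b : ℕ} (hk : 3 ≤ k) (hba : b ≤ a) :
    schurCoeff (Xpoly (spiderKR k r) fun _ => 1) a b =
      (if a = k + r ∧ b = r + 1 then 1 else 0) -
        if a + 1 = k + r ∧ b = r + 1 + 1 then 1 else 0 := by
  rw [Xpoly_spiderKR]
  exact schurCoeff_X_pow_mul_X_pow_add_swap (by omega) hba

lemma schurCoeff_Xpoly_matchGraph {k r a b : ℕ} (hba : b ≤ a) :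
    schurCoeff (Xpoly (matchGraph k r) fun _ => 1) a b =
      2 ^ (r + 1) * if r + 1 ≤ b ∧ a + b = 2 * (r + 1) + (k - 1) then
        ((k - 1).choose (a - (r + 1)) : ℤ) - (k - 1).choose (a - (r + 1) + 1) else 0 := by
  rw [Xpoly_matchGraph, schurCoeff_nsmul, schurCoeff_X_mul_X_pow_mul_X_add_X_pow hba,
    nsmul_eq_mul]
  push_cast
  rfl

lemma twoSPos_Xpoly_matchGraph (k r : ℕ) : TwoSPos (Xpoly (matchGraph k r) fun _ => 1) := by
  rw [Xpoly_matchGraph]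
  exact (twoSPos_X_mul_X_pow_mul_X_add_X_pow _ _).nsmul _

/-- Let `k ≥ 3`, `r ≥ 0`, and let `X` be the two-variable chromatic symmetric
function of the spider `S(1ᵏ,2ʳ)`.  Then `c_{(r+k,r+1)}(X) = 1`,
`c_{(r+k-1,r+2)}(X) = -1`, and all other two-row Schur coefficients of `X` vanish.
Moreover, for the graph `H` of `r+1` disjoint edges plus `k-1` isolated vertices,
`c_{(r+k,r+1)}(X_H) ≥ 2^{r+1}`, `c_{(r+k-1,r+2)}(X_H) ≥ 2^{r+1}`, and all two-row
Schur coefficients of `X_H` are nonnegative. -/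
theorem spiderKR_schurCoeffs (k r : ℕ) (hk : 3 ≤ k) :
    schurCoeff (Xpoly (spiderKR k r) fun _ => 1) (r + k) (r + 1) = 1 ∧
    schurCoeff (Xpoly (spiderKR k r) fun _ => 1) (r + k - 1) (r + 2) = -1 ∧
    (∀ a b : ℕ, b ≤ a → ¬(a = r + k ∧ b = r + 1) → ¬(a = r + k - 1 ∧ b = r + 2) →
      schurCoeff (Xpoly (spiderKR k r) fun _ => 1) a b = 0) ∧
    (2 : ℤ) ^ (r + 1) ≤ schurCoeff (Xpoly (matchGraph k r) fun _ => 1) (r + k) (r + 1) ∧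
    (2 : ℤ) ^ (r + 1) ≤
      schurCoeff (Xpoly (matchGraph k r) fun _ => 1) (r + k - 1) (r + 2) ∧
    ∀ a b : ℕ, b ≤ a → 0 ≤ schurCoeff (Xpoly (matchGraph k r) fun _ => 1) a b := by
  refine ⟨?_, ?_, fun a b hba h₁ h₂ => ?_, ?_, ?_, twoSPos_Xpoly_matchGraph k r⟩
  · rw [schurCoeff_Xpoly_spiderKR hk (by omega)]
    split_ifs <;> omega
  · rw [schurCoeff_Xpoly_spiderKR hk (by omega)]
    split_ifs <;> omega
  · rw [schurCoeff_Xpoly_spiderKR hk hba]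
    split_ifs <;> omega
  · rw [schurCoeff_Xpoly_matchGraph (by omega), if_pos (by omega),
      show r + k - (r + 1) = k - 1 by omega, Nat.choose_self, Nat.choose_succ_self]
    simp
  · rw [schurCoeff_Xpoly_matchGraph (by omega), if_pos (by omega),
      show r + k - 1 - (r + 1) = k - 1 - 1 by omega, show k - 1 - 1 + 1 = k - 1 by omega,
      Nat.choose_self, Nat.choose_symm (by omega), Nat.choose_one_right]
    exact le_mul_of_one_le_right (by positivity) (by push_cast; omega)
end

section
/- Let F be a finite forest and α : V(F) → ℕ. Suppose that the clan graph F^α has a connected component T that is connected and bipartite with bipartition parts of sizes r+2 and r for some r ≥ 1, that the two-variable chromatic symmetric function of every other connected component of F^α is 2-s-positive, and that X_F^α(x_1,x_2) is not 2-s-positive. Then F^α has no isolated vertices. -/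
/-- The clan graph `G^α`: each vertex `v` of `G` is replaced by a clique on `α v`
vertices (the clique of `v`), and every vertex of the clique of `u` is adjacent to
every vertex of the clique of `v` whenever `uv ∈ E(G)`. -/
def clanGraph {V : Type} (G : SimpleGraph V) (α : V → ℕ) :
    SimpleGraph (Σ v : V, Fin (α v)) where
  Adj a b := (a.1 = b.1 ∧ a ≠ b) ∨ G.Adj a.1 b.1
  symm := by
    constructor
    rintro a b (⟨h1, h2⟩ | h)
    · exact Or.inl ⟨h1.symm, h2.symm⟩
    · exact Or.inr h.symm
  loopless := by
    constructor
    rintro a (⟨-, h⟩ | h)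
    · exact h rfl
    · exact G.loopless.irrefl a.1 h

/-!
Colorings of the clan graph `F^α` with two colors are the multicolorings of `F`, each counted
`∏ v, (α v)!` times, so `X_F^α` is 2-s-positive as soon as `X_{F^α}` is, and `X_{F^α}` is the
product of the polynomials of the components of `F^α`. A connected graph with a proper
2-coloring with color classes of sizes `a` and `b` has exactly two proper 2-colorings, so its
polynomial is `x₁^a x₂^b + x₁^b x₂^a` (without one it is `0`); this is 2-s-positive only when
`|a - b| ≤ 1`, i.e. for `2 (x₁x₂)^a` and `(x₁x₂)^b (x₁ + x₂)`, and multiplying a symmetric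
2-s-positive polynomial by either keeps it 2-s-positive. An isolated vertex would contribute
the factor `x₁ + x₂`, and `(x₁^(r+2) x₂^r + x₁^r x₂^(r+2)) (x₁ + x₂) = (x₁x₂)^r s_(3)` is
2-s-positive, so `X_F^α` would be 2-s-positive.
-/

open MvPolynomial Finset

noncomputable def coeffXY (f : MvPolynomial (Fin 2) ℤ) (k l : ℕ) : ℤ :=
  f.coeff (Finsupp.single 0 k + Finsupp.single 1 l)

/-- The polynomial `X_H` of a connected graph `H` whose bipartition has parts of sizes
`a` and `b`. -/
noncomputable def symMonomial (a b : ℕ) : MvPolynomial (Fin 2) ℤ :=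
  X 0 ^ a * X 1 ^ b + X 0 ^ b * X 1 ^ a

section TwoVariables

variable {f g : MvPolynomial (Fin 2) ℤ} {a b k l : ℕ}

lemma schurCoeff_zero_right : schurCoeff f k 0 = coeffXY f k 0 := by
  simp [schurCoeff, coeffXY]

lemma schurCoeff_succ_right :
    schurCoeff f k (l + 1) = coeffXY f k (l + 1) - coeffXY f (k + 1) l := by
  simp [schurCoeff, coeffXY]

lemma coeffXY_add : coeffXY (f + g) k l = coeffXY f k l + coeffXY g k l :=
  coeff_add _ _ _

lemma coeffXY_mul_X_zero_succ : coeffXY (f * X 0) (k + 1) l = coeffXY f k l := by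
  rw [coeffXY, coeffXY, ← coeff_mul_X _ 0 f, Finsupp.single_add]
  congr 1
  abel

lemma coeffXY_mul_X_one_succ : coeffXY (f * X 1) k (l + 1) = coeffXY f k l := by
  rw [coeffXY, coeffXY, ← coeff_mul_X _ 1 f, Finsupp.single_add, add_assoc]

lemma coeffXY_mul_X_zero_zero : coeffXY (f * X 0) 0 l = 0 := by
  rw [coeffXY, coeff_mul_X', if_neg]
  simp

lemma coeffXY_mul_X_one_zero : coeffXY (f * X 1) k 0 = 0 := by
  rw [coeffXY, coeff_mul_X', if_neg]
  simp

lemma coeffXY_X_pow_mul_X_pow :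
    coeffXY (X 0 ^ a * X 1 ^ b) k l = if a = k ∧ b = l then 1 else 0 := by
  rw [coeffXY, X_pow_eq_monomial, X_pow_eq_monomial, monomial_mul, one_mul, coeff_monomial]
  congr 1
  apply propext
  constructor
  · intro h
    exact ⟨by simpa using congrArg (· 0) h, by simpa using congrArg (· 1) h⟩
  · rintro ⟨rfl, rfl⟩
    rfl

lemma coeffXY_symMonomial :
    coeffXY (symMonomial a b) k l =
      (if a = k ∧ b = l then 1 else 0) + if b = k ∧ a = l then 1 else 0 := by
  rw [symMonomial, coeffXY_add, coeffXY_X_pow_mul_X_pow, coeffXY_X_pow_mul_X_pow]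

lemma coeffXY_comm (hf : f.IsSymmetric) : coeffXY f k l = coeffXY f l k := by
  rw [coeffXY, coeffXY, ← coeff_rename_mapDomain _ (Equiv.swap 0 1).injective, hf]
  congr 1
  simp [Finsupp.mapDomain_add, Finsupp.mapDomain_single, add_comm]

lemma schurCoeff_self_succ_of_isSymmetric (hf : f.IsSymmetric) : schurCoeff f k (k + 1) = 0 := by
  rw [schurCoeff_succ_right, coeffXY_comm hf, sub_self]

lemma schurCoeff_mul_X_zero_mul_X_one_succ :
    schurCoeff (f * (X 0 * X 1)) (k + 1) (l + 1) = schurCoeff f k l := by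
  simp only [← mul_assoc]
  cases l with
  | zero => simp [schurCoeff_zero_right, schurCoeff_succ_right, coeffXY_mul_X_one_succ,
      coeffXY_mul_X_one_zero, coeffXY_mul_X_zero_succ]
  | succ l => simp [schurCoeff_succ_right, coeffXY_mul_X_one_succ, coeffXY_mul_X_zero_succ]

lemma schurCoeff_mul_X_zero_mul_X_one_zero : schurCoeff (f * (X 0 * X 1)) k 0 = 0 := by
  rw [← mul_assoc, schurCoeff_zero_right, coeffXY_mul_X_one_zero]

/-- Pieri's rule for multiplication by `s₁ = x₁ + x₂`, read on Schur coefficients. -/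
lemma schurCoeff_mul_X_zero_add_X_one_succ :
    schurCoeff (f * (X 0 + X 1)) (k + 1) (l + 1) =
      schurCoeff f k (l + 1) + schurCoeff f (k + 1) l := by
  cases l with
  | zero => simp [mul_add, schurCoeff_zero_right, schurCoeff_succ_right, coeffXY_add,
      coeffXY_mul_X_one_succ, coeffXY_mul_X_one_zero, coeffXY_mul_X_zero_succ]
  | succ l =>
    simp only [mul_add, schurCoeff_succ_right, coeffXY_add, coeffXY_mul_X_zero_succ,
      coeffXY_mul_X_one_succ]
    ring

lemma schurCoeff_mul_X_zero_add_X_one_zero :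
    schurCoeff (f * (X 0 + X 1)) (k + 1) 0 = schurCoeff f k 0 := by
  simp [mul_add, schurCoeff_zero_right, coeffXY_add, coeffXY_mul_X_one_zero,
    coeffXY_mul_X_zero_succ]

lemma twoSPos_zero : TwoSPos 0 := by
  intro k l _
  simp [schurCoeff]

lemma TwoSPos.add (hf : TwoSPos f) (hg : TwoSPos g) : TwoSPos (f + g) := by
  intro k l hlk
  have hadd : schurCoeff (f + g) k l = schurCoeff f k l + schurCoeff g k l := by
    simp only [schurCoeff, coeff_add]
    split_ifs <;> ring
  rw [hadd]
  exact add_nonneg (hf k l hlk) (hg k l hlk)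

lemma TwoSPos.of_nsmul {n : ℕ} (hn : n ≠ 0) (h : TwoSPos (n • f)) : TwoSPos f := by
  intro k l hlk
  have hsmul : schurCoeff (n • f) k l = n * schurCoeff f k l := by
    simp only [schurCoeff, coeff_smul]
    split_ifs <;> simp only [nsmul_eq_mul] <;> ring
  have := h k l hlk
  rw [hsmul] at this
  exact (mul_nonneg_iff_of_pos_left (by positivity)).1 this

lemma TwoSPos.mul_X_zero_mul_X_one (hf : TwoSPos f) : TwoSPos (f * (X 0 * X 1)) := by
  rintro k (_ | l) hlk
  · rw [schurCoeff_mul_X_zero_mul_X_one_zero]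
  · obtain ⟨k, rfl⟩ : ∃ k', k = k' + 1 := ⟨k - 1, by omega⟩
    rw [schurCoeff_mul_X_zero_mul_X_one_succ]
    exact hf k l (by omega)

lemma TwoSPos.mul_X_zero_mul_X_one_pow (hf : TwoSPos f) (n : ℕ) :
    TwoSPos (f * (X 0 * X 1) ^ n) := by
  induction n with
  | zero => simpa using hf
  | succ n ih => simpa only [pow_succ, ← mul_assoc] using ih.mul_X_zero_mul_X_one

lemma TwoSPos.mul_X_zero_add_X_one (hs : f.IsSymmetric) (hf : TwoSPos f) :
    TwoSPos (f * (X 0 + X 1)) := by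
  rintro (_ | k) (_ | l) hlk
  · simp [schurCoeff_zero_right, coeffXY_add, mul_add, coeffXY_mul_X_zero_zero,
      coeffXY_mul_X_one_zero]
  · omega
  · rw [schurCoeff_mul_X_zero_add_X_one_zero]
    exact hf k 0 (Nat.zero_le k)
  · rw [schurCoeff_mul_X_zero_add_X_one_succ]
    refine add_nonneg ?_ (hf (k + 1) l (by omega))
    rcases Nat.lt_or_eq_of_le (Nat.le_of_succ_le_succ hlk) with hlt | rfl
    · exact hf k (l + 1) hlt
    · rw [schurCoeff_self_succ_of_isSymmetric hs]

lemma isSymmetric_of_rename_swap (h : rename (Equiv.swap (0 : Fin 2) 1) f = f) :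
    f.IsSymmetric := by
  intro e
  obtain rfl | rfl : e = 1 ∨ e = Equiv.swap 0 1 := by revert e; decide
  · exact rename_id_apply f
  · exact h

lemma isSymmetric_X_zero_mul_X_one : (X 0 * X 1 : MvPolynomial (Fin 2) ℤ).IsSymmetric :=
  isSymmetric_of_rename_swap <| by simp [mul_comm]

lemma isSymmetric_symMonomial : (symMonomial a b).IsSymmetric :=
  isSymmetric_of_rename_swap <| by
    simp only [symMonomial, map_add, map_mul, map_pow, rename_X, Equiv.swap_apply_left,
      Equiv.swap_apply_right]
    ring

lemma symMonomial_comm : symMonomial a b = symMonomial b a :=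
  add_comm _ _

lemma symMonomial_self : symMonomial a a = (X 0 * X 1) ^ a + (X 0 * X 1) ^ a := by
  rw [symMonomial, mul_pow]

lemma symMonomial_succ_self : symMonomial (a + 1) a = (X 0 * X 1) ^ a * (X 0 + X 1) := by
  rw [symMonomial]
  ring

lemma TwoSPos.mul_symMonomial (hs : f.IsSymmetric) (hf : TwoSPos f)
    (hab : a ≤ b + 1) (hba : b ≤ a + 1) : TwoSPos (f * symMonomial a b) := by
  wlog hle : b ≤ a generalizing a b
  · rw [symMonomial_comm]
    exact this hba hab (by omega)
  obtain rfl | rfl : a = b ∨ a = b + 1 := by omega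
  · rw [symMonomial_self, mul_add]
    exact (hf.mul_X_zero_mul_X_one_pow a).add (hf.mul_X_zero_mul_X_one_pow a)
  · rw [symMonomial_succ_self, ← mul_assoc]
    exact (hf.mul_X_zero_mul_X_one_pow b).mul_X_zero_add_X_one
      (hs.mul ((symmetricSubalgebra (Fin 2) ℤ).pow_mem isSymmetric_X_zero_mul_X_one b))

lemma le_succ_of_twoSPos_symMonomial (h : TwoSPos (symMonomial a b)) : a ≤ b + 1 := by
  by_contra hab
  obtain ⟨d, rfl⟩ : ∃ d, a = b + 2 + d := ⟨a - (b + 2), by omega⟩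
  have := h (b + 1 + d) (b + 1) (by omega)
  rw [schurCoeff_succ_right, coeffXY_symMonomial, coeffXY_symMonomial] at this
  split_ifs at this <;> omega

lemma twoSPos_symMonomial_three_zero_add_symMonomial_two_one :
    TwoSPos (symMonomial 3 0 + symMonomial 2 1) := by
  rintro k (_ | l) hlk
  · rw [schurCoeff_zero_right, coeffXY_add, coeffXY_symMonomial, coeffXY_symMonomial]
    split_ifs <;> norm_num
  · rw [schurCoeff_succ_right, coeffXY_add, coeffXY_add, coeffXY_symMonomial,
      coeffXY_symMonomial, coeffXY_symMonomial, coeffXY_symMonomial]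
    split_ifs <;> simp only [and_false, false_and] at * <;> omega

lemma twoSPos_symMonomial_add_two_mul_symMonomial_one_zero (r : ℕ) :
    TwoSPos (symMonomial (r + 2) r * symMonomial 1 0) := by
  have h : symMonomial (r + 2) r * symMonomial 1 0 =
      (symMonomial 3 0 + symMonomial 2 1) * (X 0 * X 1) ^ r := by
    simp only [symMonomial]
    ring
  rw [h]
  exact twoSPos_symMonomial_three_zero_add_symMonomial_two_one.mul_X_zero_mul_X_one_pow r

lemma TwoSPos.mul_prod {ι : Type*} [DecidableEq ι] {s : Finset ι}
    {g : ι → MvPolynomial (Fin 2) ℤ} (hs : f.IsSymmetric) (hf : TwoSPos f)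
    (hg : ∀ i ∈ s, g i = 0 ∨ ∃ a b, a ≤ b + 1 ∧ b ≤ a + 1 ∧ g i = symMonomial a b) :
    TwoSPos (f * ∏ i ∈ s, g i) := by
  suffices (f * ∏ i ∈ s, g i).IsSymmetric ∧ TwoSPos (f * ∏ i ∈ s, g i) from this.2
  induction s using Finset.induction_on with
  | empty => simpa using ⟨hs, hf⟩
  | insert j s hj ih =>
    obtain ⟨ihs, ihf⟩ := ih fun i hi => hg i (mem_insert_of_mem hi)
    rw [prod_insert hj, mul_left_comm, mul_comm]
    rcases hg j (mem_insert_self j s) with h0 | ⟨a, b, hab, hba, hj⟩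
    · simpa [h0] using twoSPos_zero
    · rw [hj]
      exact ⟨ihs.mul isSymmetric_symMonomial, ihf.mul_symMonomial ihs hab hba⟩

end TwoVariables

lemma Fin.two_eq_add_one_of_ne : ∀ {a b : Fin 2}, a ≠ b → b = a + 1 := by decide

lemma card_injective_image_eq_factorial {β : Type} [Fintype β] [DecidableEq β] {n : ℕ}
    {s : Finset β} (hs : #s = n) :
    #{f : Fin n → β | Function.Injective f ∧ univ.image f = s} = n.factorial := by
  have hcard : Fintype.card (Fin n ≃ s) = n.factorial := by
    rw [Fintype.card_equiv (s.equivFinOfCardEq hs).symm, Fintype.card_fin]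
  rw [← hcard, ← card_univ, ← card_image_of_injective _ fun e e' h =>
    Equiv.ext fun j => Subtype.ext (congrFun h j)]
  congr 1
  ext f
  simp only [mem_filter_univ, mem_image, mem_univ, true_and]
  constructor
  · rintro ⟨hinj, himg⟩
    have hmem : ∀ j, f j ∈ s := fun j => himg ▸ mem_image_of_mem f (mem_univ j)
    have hbij : Function.Bijective fun j => (⟨f j, hmem j⟩ : s) :=
      (Fintype.bijective_iff_injective_and_card _).2
        ⟨fun i j h => hinj (congrArg Subtype.val h), by simp [hs]⟩
    exact ⟨Equiv.ofBijective _ hbij, rfl⟩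
  · rintro ⟨e, rfl⟩
    refine ⟨Subtype.val_injective.comp e.injective, ?_⟩
    ext x
    simp only [mem_image, mem_univ, true_and]
    exact ⟨fun ⟨j, hj⟩ => hj ▸ (e j).2, fun hx => ⟨e.symm ⟨x, hx⟩, by simp⟩⟩

lemma card_filter_val_mem {U : Type} [DecidableEq U] {S : Set U} [Fintype S] {s : Finset U} (hs : ∀ x ∈ s, x ∈ S) :
    #{w : S | w.1 ∈ s} = #s :=
  card_bij (fun w _ => w.1) (fun w hw => (mem_filter_univ w).1 hw)
    (fun _ _ _ _ h => Subtype.ext h) (fun x hx => ⟨⟨x, hs x hx⟩, by simpa using hx, rfl⟩)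

namespace SimpleGraph

variable {U : Type} {G : SimpleGraph U}

lemma Reachable.eq_of_forall_adj {β : Type*} {f : U → β} (hf : ∀ a b, G.Adj a b → f a = f b)
    {u v : U} (h : G.Reachable u v) : f u = f v := by
  obtain ⟨p⟩ := h
  induction p with
  | nil => rfl
  | cons hadj _ ih => exact (hf _ _ hadj).trans ih

lemma eq_of_connectedComponentMk_eq_of_isolated {z w : U} (hz : ∀ w, ¬ G.Adj z w)
    (h : G.connectedComponentMk w = G.connectedComponentMk z) : w = z := by
  obtain ⟨p⟩ := (ConnectedComponent.exact h).symm
  cases p with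
  | nil => rfl
  | cons hadj _ => exact absurd hadj (hz _)

end SimpleGraph

section Colorings

variable {U : Type} [Fintype U]

lemma prod_prod_X_eq_X_pow_mul_X_pow (κ : U → Finset (Fin 2)) :
    ∏ u, ∏ i ∈ κ u, (X i : MvPolynomial (Fin 2) ℤ) =
      X 0 ^ #{u | 0 ∈ κ u} * X 1 ^ #{u | 1 ∈ κ u} := by
  simp_rw [← Fintype.prod_ite_mem (κ _)]
  rw [prod_comm, Fin.prod_univ_two]
  simp_rw [← prod_filter, prod_const]

lemma prod_X_eq_X_pow_mul_X_pow (c : U → Fin 2) :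
    ∏ u, (X (c u) : MvPolynomial (Fin 2) ℤ) = X 0 ^ #{u | c u = 0} * X 1 ^ #{u | c u = 1} := by
  simpa [eq_comm] using prod_prod_X_eq_X_pow_mul_X_pow fun u => {c u}

variable [DecidableEq U]

open Classical in
noncomputable def properColorings (H : SimpleGraph U) : Finset (U → Fin 2) :=
  univ.filter fun c => ∀ a b, H.Adj a b → c a ≠ c b

open Classical in
noncomputable def properMulticolorings (H : SimpleGraph U) (α : U → ℕ) :
    Finset (U → Finset (Fin 2)) :=
  univ.filter (ProperMulti H α)

lemma mem_properColorings {H : SimpleGraph U} {c : U → Fin 2} :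
    c ∈ properColorings H ↔ ∀ a b, H.Adj a b → c a ≠ c b := by
  simp [properColorings]

lemma mem_properMulticolorings {H : SimpleGraph U} {α : U → ℕ} {κ : U → Finset (Fin 2)} :
    κ ∈ properMulticolorings H α ↔ ProperMulti H α κ := by
  simp [properMulticolorings]

lemma Xpoly_eq_sum (H : SimpleGraph U) (α : U → ℕ) :
    Xpoly H α = ∑ κ ∈ properMulticolorings H α, ∏ u, ∏ i ∈ κ u, X i := by
  classical
  simp_rw [prod_prod_X_eq_X_pow_mul_X_pow]
  rw [Xpoly, finsum_eq_sum_of_fintype]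
  exact (sum_subtype _ (fun κ => mem_properMulticolorings)
    fun κ => X 0 ^ #{u | 0 ∈ κ u} * X 1 ^ #{u | 1 ∈ κ u}).symm

lemma Xpoly_one_eq_sum (H : SimpleGraph U) :
    Xpoly H (fun _ => 1) = ∑ c ∈ properColorings H, ∏ u, X (c u) := by
  rw [Xpoly_eq_sum]
  symm
  refine sum_bij (fun c _ u => {c u}) (fun c hc => ?_) (fun c _ c' _ h => ?_) (fun κ hκ => ?_)
    (fun c _ => by simp)
  · refine mem_properMulticolorings.2 ⟨fun u => card_singleton _, fun a b hab => ?_⟩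
    exact disjoint_iff_inter_eq_empty.1 (disjoint_singleton.2 (mem_properColorings.1 hc a b hab))
  · funext u
    exact singleton_injective (congrFun h u)
  · obtain ⟨hcard, hdisj⟩ := mem_properMulticolorings.1 hκ
    choose c hc using fun u => card_eq_one.1 (hcard u)
    refine ⟨c, mem_properColorings.2 fun a b hab h => ?_, funext hc |>.symm⟩
    simpa [hc, h] using hdisj a b hab

open Classical in
lemma Xpoly_one_eq_prod_induce {ι : Type} [Fintype ι] (H : SimpleGraph U) (p : U → ι)
    (hp : ∀ a b, H.Adj a b → p a = p b) :
    Xpoly H (fun _ => 1) = ∏ i, Xpoly (H.induce {u | p u = i}) (fun _ => 1) := by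
  simp_rw [Xpoly_one_eq_sum, prod_univ_sum]
  refine sum_nbij' (fun c i u => c u) (fun D u => D (p u) ⟨u, rfl⟩) (fun c hc => ?_)
    (fun D hD => ?_) (fun c _ => rfl) (fun D _ => ?_) (fun c _ => ?_)
  · exact Fintype.mem_piFinset.2 fun i => mem_properColorings.2 fun a b hab =>
      mem_properColorings.1 hc a b hab
  · refine mem_properColorings.2 fun a b hab => ?_
    have hD' := fun i => mem_properColorings.1 (Fintype.mem_piFinset.1 hD i)
    -- `D (p a)` and `D (p b)` live on different fibres, so compare them on a common one.
    have key : ∀ i j (ha : p a = i) (hb : p b = j), i = j → D i ⟨a, ha⟩ ≠ D j ⟨b, hb⟩ := by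
      rintro i _ ha hb rfl
      exact hD' i _ _ hab
    exact key _ _ rfl rfl (hp a b hab)
  · funext i ⟨u, hu⟩
    subst hu
    rfl
  · exact (Fintype.prod_fiberwise p _).symm

/-- The difference `c' - c` of two proper colorings is constant along edges. -/
lemma properColorings_eq_pair_of_connected {H : SimpleGraph U} (hH : H.Connected)
    {c : U → Fin 2} (hc : c ∈ properColorings H) :
    properColorings H = {c, fun u => c u + 1} := by
  ext c'
  rw [mem_insert, mem_singleton]
  constructor
  · intro hc'
    have hd : ∀ a b, H.Adj a b → c' a - c a = c' b - c b := fun a b hab => by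
      rw [Fin.two_eq_add_one_of_ne (mem_properColorings.1 hc a b hab),
        Fin.two_eq_add_one_of_ne (mem_properColorings.1 hc' a b hab), add_sub_add_right_eq_sub]
    obtain ⟨u₀⟩ := hH.nonempty
    have hconst : ∀ u, c' u = c u + (c' u₀ - c u₀) := fun u => by
      rw [(hH.preconnected u₀ u).eq_of_forall_adj hd, add_sub_cancel]
    obtain h | h : c' u₀ - c u₀ = 0 ∨ c' u₀ - c u₀ = 1 := by
      generalize c' u₀ - c u₀ = x
      revert x
      decide
    · exact Or.inl (funext fun u => by rw [hconst u, h, add_zero])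
    · exact Or.inr (funext fun u => by rw [hconst u, h])
  · rintro (rfl | rfl)
    · exact hc
    · exact mem_properColorings.2 fun a b hab h =>
        mem_properColorings.1 hc a b hab (add_right_cancel h)

lemma Xpoly_one_of_connected {H : SimpleGraph U} (hH : H.Connected)
    {c : U → Fin 2} (hc : c ∈ properColorings H) :
    Xpoly H (fun _ => 1) = symMonomial #{u | c u = 0} #{u | c u = 1} := by
  obtain ⟨u₀⟩ := hH.nonempty
  have hne : c ≠ fun u => c u + 1 := fun h => by
    have := congrFun h u₀
    generalize c u₀ = x at this
    revert x
    decide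
  have hswap : ∀ x : Fin 2, (x + 1 = 0 ↔ x = 1) ∧ (x + 1 = 1 ↔ x = 0) := by decide
  rw [Xpoly_one_eq_sum, properColorings_eq_pair_of_connected hH hc, sum_pair hne,
    prod_X_eq_X_pow_mul_X_pow, prod_X_eq_X_pow_mul_X_pow, symMonomial]
  simp only [hswap]

lemma Xpoly_one_eq_zero_or_symMonomial_of_connected {H : SimpleGraph U} (hH : H.Connected)
    (hpos : TwoSPos (Xpoly H (fun _ => 1))) :
    Xpoly H (fun _ => 1) = 0 ∨
      ∃ a b, a ≤ b + 1 ∧ b ≤ a + 1 ∧ Xpoly H (fun _ => 1) = symMonomial a b := by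
  rcases (properColorings H).eq_empty_or_nonempty with h | ⟨c, hc⟩
  · left
    rw [Xpoly_one_eq_sum, h, sum_empty]
  · right
    rw [Xpoly_one_of_connected hH hc] at hpos ⊢
    refine ⟨_, _, le_succ_of_twoSPos_symMonomial hpos, ?_, rfl⟩
    rw [symMonomial_comm] at hpos
    exact le_succ_of_twoSPos_symMonomial hpos

open Classical in
lemma Xpoly_induce_of_bipartition {G : SimpleGraph U} {C : G.ConnectedComponent}
    {A B : Finset U} (hcover : ∀ w, w ∈ A ∪ B ↔ G.connectedComponentMk w = C)
    (hdisj : Disjoint A B) (hAind : ∀ u ∈ A, ∀ w ∈ A, ¬ G.Adj u w)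
    (hBind : ∀ u ∈ B, ∀ w ∈ B, ¬ G.Adj u w) :
    Xpoly (G.induce {w | G.connectedComponentMk w = C}) (fun _ => 1) = symMonomial #A #B := by
  set S := {w | G.connectedComponentMk w = C}
  have hB : ∀ w : S, w.1 ∉ A ↔ w.1 ∈ B := fun w => by
    have := (hcover w).2 w.2
    constructor
    · intro hA
      simpa [hA] using this
    · exact fun hB hA => disjoint_left.1 hdisj hA hB
  let c : S → Fin 2 := fun w => if w.1 ∈ A then 0 else 1
  have hc : c ∈ properColorings (G.induce S) := mem_properColorings.2 fun a b hab => by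
    by_cases ha : a.1 ∈ A <;> by_cases hb : b.1 ∈ A
    · exact absurd hab (hAind _ ha _ hb)
    · simp [c, ha, hb]
    · simp [c, ha, hb]
    · exact absurd hab (hBind _ ((hB a).1 ha) _ ((hB b).1 hb))
  rw [Xpoly_one_of_connected (H := G.induce S) C.connected_toSimpleGraph hc]
  congr 1
  · simp only [c, ite_eq_left_iff, one_ne_zero, imp_false, not_not]
    exact card_filter_val_mem fun x hx => (hcover x).1 (mem_union_left B hx)
  · simp only [c, ite_eq_right_iff, zero_ne_one, imp_false, hB]
    exact card_filter_val_mem fun x hx => (hcover x).1 (mem_union_right A hx)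

open Classical in
lemma Xpoly_induce_of_isolated {G : SimpleGraph U} {z : U} (hz : ∀ w, ¬ G.Adj z w) :
    Xpoly (G.induce {w | G.connectedComponentMk w = G.connectedComponentMk z}) (fun _ => 1) =
      symMonomial 1 0 := by
  simpa using Xpoly_induce_of_bipartition (A := {z}) (B := ∅)
    (fun w => by
      rw [union_empty, mem_singleton]
      exact ⟨fun h => h ▸ rfl, G.eq_of_connectedComponentMk_eq_of_isolated hz⟩)
    (disjoint_empty_right _) (by simp) (by simp)

end Colorings

section ClanGraph

variable {V : Type} [Fintype V] [DecidableEq V] {F : SimpleGraph V} {α : V → ℕ}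
  {c : (Σ v, Fin (α v)) → Fin 2}

def cliqueColors (c : (Σ v, Fin (α v)) → Fin 2) (v : V) : Finset (Fin 2) :=
  univ.image fun j => c ⟨v, j⟩

lemma injective_of_mem_properColorings_clanGraph (hc : c ∈ properColorings (clanGraph F α))
    (v : V) : Function.Injective fun j : Fin (α v) => c ⟨v, j⟩ := fun i j hij => by
  by_contra hne
  exact mem_properColorings.1 hc ⟨v, i⟩ ⟨v, j⟩ (Or.inl ⟨rfl, by simpa using hne⟩) hij

lemma properMulti_cliqueColors (hc : c ∈ properColorings (clanGraph F α)) :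
    ProperMulti F α (cliqueColors c) := by
  refine ⟨fun v => ?_, fun u v huv => ?_⟩
  · rw [cliqueColors, card_image_of_injective _ (injective_of_mem_properColorings_clanGraph hc v),
      card_univ, Fintype.card_fin]
  · refine eq_empty_of_forall_notMem fun x hx => ?_
    simp only [cliqueColors, mem_inter, mem_image, mem_univ, true_and] at hx
    obtain ⟨⟨i, rfl⟩, ⟨j, hj⟩⟩ := hx
    exact mem_properColorings.1 hc ⟨u, i⟩ ⟨v, j⟩ (Or.inr huv) hj.symm

lemma prod_X_eq_prod_prod_cliqueColors (hc : c ∈ properColorings (clanGraph F α)) :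
    ∏ w, (X (c w) : MvPolynomial (Fin 2) ℤ) = ∏ v, ∏ i ∈ cliqueColors c v, X i := by
  rw [Fintype.prod_sigma]
  refine prod_congr rfl fun v _ => ?_
  rw [cliqueColors, prod_image (injective_of_mem_properColorings_clanGraph hc v).injOn]

lemma mem_properColorings_clanGraph_and_cliqueColors_eq_iff {κ : V → Finset (Fin 2)}
    (hκ : ProperMulti F α κ) :
    c ∈ properColorings (clanGraph F α) ∧ cliqueColors c = κ ↔
      ∀ v, Function.Injective (fun j : Fin (α v) => c ⟨v, j⟩) ∧ cliqueColors c v = κ v := by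
  refine ⟨fun ⟨hc, hκc⟩ v => ⟨injective_of_mem_properColorings_clanGraph hc v, hκc ▸ rfl⟩,
    fun h => ⟨mem_properColorings.2 ?_, funext fun v => (h v).2⟩⟩
  rintro ⟨u, i⟩ ⟨v, j⟩ (⟨huv, hne⟩ | huv) hij
  · obtain rfl : u = v := huv
    exact hne (by rw [(h u).1 hij])
  · have hi : c ⟨u, i⟩ ∈ κ u := (h u).2 ▸ mem_image_of_mem _ (mem_univ i)
    have hj : c ⟨v, j⟩ ∈ κ v := (h v).2 ▸ mem_image_of_mem _ (mem_univ j)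
    rw [hij] at hi
    simpa [hκ.2 u v huv] using mem_inter.2 ⟨hi, hj⟩

lemma card_cliqueColors_fiber {κ : V → Finset (Fin 2)} (hκ : ProperMulti F α κ) :
    #{c ∈ properColorings (clanGraph F α) | cliqueColors c = κ} = ∏ v, (α v).factorial := by
  rw [← prod_congr rfl fun v _ => card_injective_image_eq_factorial (hκ.1 v),
    ← Fintype.card_piFinset]
  refine card_equiv (Equiv.piCurry fun v (_ : Fin (α v)) => Fin 2) fun c => ?_
  simp only [mem_filter, mem_properColorings_clanGraph_and_cliqueColors_eq_iff hκ,
    Fintype.mem_piFinset, mem_univ, true_and]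
  rfl

/-- Each proper multicoloring `κ` of `F` comes from exactly `∏ v, (α v)!` proper colorings of
the clan graph, one for each choice of bijections `Fin (α v) ≃ κ v`. -/
theorem Xpoly_clanGraph :
    Xpoly (clanGraph F α) (fun _ => 1) = (∏ v, (α v).factorial) • Xpoly F α := by
  rw [Xpoly_one_eq_sum, Xpoly_eq_sum, smul_sum,
    ← sum_fiberwise_of_maps_to fun c hc => mem_properMulticolorings.2 (properMulti_cliqueColors hc)]
  refine sum_congr rfl fun κ hκ => ?_
  rw [sum_congr rfl fun c hc => prod_X_eq_prod_prod_cliqueColors (mem_filter.1 hc).1,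
    sum_congr rfl fun c hc => by rw [(mem_filter.1 hc).2], sum_const,
    card_cliqueColors_fiber (mem_properMulticolorings.1 hκ)]

lemma twoSPos_Xpoly_of_twoSPos_clanGraph (h : TwoSPos (Xpoly (clanGraph F α) fun _ => 1)) :
    TwoSPos (Xpoly F α) :=
  TwoSPos.of_nsmul (prod_ne_zero_iff.2 fun v _ => (α v).factorial_ne_zero)
    (by rwa [Xpoly_clanGraph] at h)

end ClanGraph

open scoped Classical in
theorem clanGraph_no_isolated_vertices_general {V : Type} [Fintype V] [DecidableEq V]
    (F : SimpleGraph V) (α : V → ℕ) (r : ℕ)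
    (C : (clanGraph F α).ConnectedComponent)
    (A B : Finset (Σ v : V, Fin (α v)))
    (hcover : ∀ w : Σ v : V, Fin (α v),
      w ∈ A ∪ B ↔ (clanGraph F α).connectedComponentMk w = C)
    (hdisj : Disjoint A B) (hAcard : A.card = r + 2) (hBcard : B.card = r)
    (hAind : ∀ u ∈ A, ∀ w ∈ A, ¬ (clanGraph F α).Adj u w)
    (hBind : ∀ u ∈ B, ∀ w ∈ B, ¬ (clanGraph F α).Adj u w)
    (hother : ∀ C' : (clanGraph F α).ConnectedComponent, C' ≠ C →
      TwoSPos (Xpoly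
        ((clanGraph F α).induce
          {w : Σ v : V, Fin (α v) | (clanGraph F α).connectedComponentMk w = C'})
        (fun _ => 1)))
    (hneg : ¬ TwoSPos (Xpoly F α)) :
    ∀ w : Σ v : V, Fin (α v), ∃ w', (clanGraph F α).Adj w w' := by
  by_contra! ⟨z, hz⟩
  have hzC : (clanGraph F α).connectedComponentMk z ≠ C := fun h => by
    have hA : ∀ a ∈ A, a = z := fun a ha => (clanGraph F α).eq_of_connectedComponentMk_eq_of_isolated
      hz (((hcover a).1 (mem_union_left B ha)).trans h.symm)
    have : #A ≤ 1 := card_le_one.2 fun a ha b hb => (hA a ha).trans (hA b hb).symm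
    omega
  refine hneg (twoSPos_Xpoly_of_twoSPos_clanGraph ?_)
  rw [Xpoly_one_eq_prod_induce _ (clanGraph F α).connectedComponentMk
      fun a b h => SimpleGraph.ConnectedComponent.connectedComponentMk_eq_of_adj h,
    ← mul_prod_erase _ _ (mem_univ C), ← mul_prod_erase _ _ (mem_erase.2 ⟨hzC, mem_univ _⟩),
    ← mul_assoc, Xpoly_induce_of_bipartition hcover hdisj hAind hBind, Xpoly_induce_of_isolated hz,
    hAcard, hBcard]
  exact TwoSPos.mul_prod (isSymmetric_symMonomial.mul isSymmetric_symMonomial)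
    (twoSPos_symMonomial_add_two_mul_symMonomial_one_zero r) fun c hc =>
      Xpoly_one_eq_zero_or_symMonomial_of_connected c.connected_toSimpleGraph
        (hother c (ne_of_mem_erase (mem_of_mem_erase hc)))

open scoped Classical in
/-- Let `F` be a finite forest, `α : V(F) → ℕ`, and suppose the clan graph `F^α`
has a connected component `C` that is bipartite with parts of sizes `r+2` and `r`
for some `r ≥ 1`, that the two-variable chromatic symmetric function of every other
connected component of `F^α` is 2-s-positive, and that `X_F^α` is not 2-s-positive.
Then `F^α` has no isolated vertices. -/
theorem clanGraph_no_isolated_vertices {V : Type} [Fintype V] [DecidableEq V]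
    (F : SimpleGraph V) (hF : F.IsAcyclic) (α : V → ℕ) (r : ℕ) (hr : 1 ≤ r)
    (C : (clanGraph F α).ConnectedComponent)
    (A B : Finset (Σ v : V, Fin (α v)))
    (hcover : ∀ w : Σ v : V, Fin (α v),
      w ∈ A ∪ B ↔ (clanGraph F α).connectedComponentMk w = C)
    (hdisj : Disjoint A B) (hAcard : A.card = r + 2) (hBcard : B.card = r)
    (hAind : ∀ u ∈ A, ∀ w ∈ A, ¬ (clanGraph F α).Adj u w)
    (hBind : ∀ u ∈ B, ∀ w ∈ B, ¬ (clanGraph F α).Adj u w)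
    (hother : ∀ C' : (clanGraph F α).ConnectedComponent, C' ≠ C →
      TwoSPos (Xpoly
        ((clanGraph F α).induce
          {w : Σ v : V, Fin (α v) | (clanGraph F α).connectedComponentMk w = C'})
        (fun _ => 1)))
    (hneg : ¬ TwoSPos (Xpoly F α)) :
    ∀ w : Σ v : V, Fin (α v), ∃ w', (clanGraph F α).Adj w w' :=
  clanGraph_no_isolated_vertices_general F α r C A B hcover hdisj hAcard hBcard hAind hBind hother
    hneg
end

section
/- Let G be a finite connected bipartite simple graph whose unique bipartition has parts of sizes k and l with k ≥ l ≥ 1. Then the two-variable chromatic symmetric function X_G(x_1,x_2) is 2-s-positive if and only if k ≤ l + 1 (the bipartition is balanced); equivalently, X_G is not 2-s-positive if and only if k ≥ l + 2. Moreover, if G is any finite non-bipartite simple graph, then X_G(x_1,x_2) = 0, so all two-row Schur coefficients of X_G vanish. -/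
open MvPolynomial Finset

private lemma fin2_aux : ∀ a b d : Fin 2, a ≠ b → (a = d ↔ ¬ b = d) := by decide

private lemma single_eq_iff (a b c d : ℕ) :
    (Finsupp.single (0:Fin 2) a + Finsupp.single 1 b
      = Finsupp.single 0 c + Finsupp.single 1 d) ↔ (a = c ∧ b = d) := by
  constructor
  · intro h
    have h0 := DFunLike.congr_fun h 0
    have h1 := DFunLike.congr_fun h 1
    simp [Finsupp.single_apply, Finsupp.add_apply] at h0 h1
    exact ⟨h0, h1⟩
  · rintro ⟨rfl, rfl⟩; rfl

private lemma coeff_XX (a b c d : ℕ) :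
    MvPolynomial.coeff (Finsupp.single 0 c + Finsupp.single 1 d)
      ((X 0 : MvPolynomial (Fin 2) ℤ) ^ a * X 1 ^ b) =
      if a = c ∧ b = d then 1 else 0 := by
  rw [X_pow_eq_monomial, X_pow_eq_monomial, monomial_mul, one_mul, coeff_monomial]
  simp [single_eq_iff]

private lemma schur_f (k l a b : ℕ) :
    schurCoeff ((X 0 : MvPolynomial (Fin 2) ℤ)^k * X 1^l + X 0^l * X 1^k) a b =
      ((if k = a ∧ l = b then 1 else 0) + (if l = a ∧ k = b then 1 else 0)) -
      if b = 0 then 0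
      else ((if k = a+1 ∧ l = b-1 then 1 else 0) + (if l = a+1 ∧ k = b-1 then 1 else 0)) := by
  unfold schurCoeff
  simp only [coeff_add, coeff_XX]

private lemma twoSPos_iff_aux (k l : ℕ) (hl : 1 ≤ l) (hlk : l ≤ k) :
    TwoSPos ((X 0 : MvPolynomial (Fin 2) ℤ)^k * X 1^l + X 0^l * X 1^k) ↔ k ≤ l + 1 := by
  constructor
  · intro h
    by_contra hk
    push_neg at hk
    have := h (k-1) (l+1) (by omega)
    rw [schur_f] at this
    split_ifs at this <;> (clear h; first | omega | tauto)
  · intro hk a b hba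
    rw [schur_f]
    split_ifs <;> omega

private lemma walk_key {V : Type} [DecidableEq V] (G : SimpleGraph V) (A B : Finset V)
    (hcov : ∀ v : V, v ∈ A ∪ B)
    (hA : ∀ u ∈ A, ∀ w ∈ A, ¬ G.Adj u w) (hB : ∀ u ∈ B, ∀ w ∈ B, ¬ G.Adj u w)
    (c : V → Fin 2) (hc : ∀ u v, G.Adj u v → c u ≠ c v) :
    ∀ u v : V, (p : G.Walk u v) → ((u ∈ A ↔ v ∈ A) ↔ c u = c v) := by
  intro u v p
  induction p with
  | nil => simp
  | @cons u x v hadj p ih =>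
    have h1 : ¬ (u ∈ A ↔ x ∈ A) := by
      intro hiff
      by_cases huA : u ∈ A
      · exact hA u huA x (hiff.mp huA) hadj
      · have hxA : x ∉ A := fun h' => huA (hiff.mpr h')
        have hu := hcov u; have hx := hcov x
        simp only [Finset.mem_union] at hu hx
        exact hB u (hu.resolve_left huA) x (hx.resolve_left hxA) hadj
    have h2 : c u ≠ c x := hc u x hadj
    rw [fin2_aux _ _ (c v) h2, ← ih]
    tauto

private lemma colorings_classified {V : Type} [Fintype V] [DecidableEq V]
    (G : SimpleGraph V) (A B : Finset V)
    (hconn : G.Connected) (hcov : ∀ v : V, v ∈ A ∪ B) (hdisj : Disjoint A B)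
    (hA : ∀ u ∈ A, ∀ w ∈ A, ¬ G.Adj u w) (hB : ∀ u ∈ B, ∀ w ∈ B, ¬ G.Adj u w)
    (hAne : A.Nonempty) :
    {κ | ProperMulti G (fun _ => 1) κ} =
      {(fun v => if v ∈ A then {0} else {1} : V → Finset (Fin 2)),
       (fun v => if v ∈ A then {1} else {0})} := by
  have hone : ∀ u x : V, G.Adj u x → ¬ (u ∈ A ↔ x ∈ A) := by
    intro u x hadj hiff
    by_cases huA : u ∈ A
    · exact hA u huA x (hiff.mp huA) hadj
    · have hxA : x ∉ A := fun h' => huA (hiff.mpr h')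
      have hu := hcov u; have hx := hcov x
      simp only [Finset.mem_union] at hu hx
      exact hB u (hu.resolve_left huA) x (hx.resolve_left hxA) hadj
  ext κ
  simp only [Set.mem_setOf_eq, Set.mem_insert_iff, Set.mem_singleton_iff]
  constructor
  · intro hκ
    have hc1 : ∀ v, ∃ a, κ v = {a} := fun v => Finset.card_eq_one.mp (hκ.1 v)
    choose c hcv using hc1
    have hc : ∀ u v, G.Adj u v → c u ≠ c v := by
      intro u v huv heq
      have h2 := hκ.2 u v huv
      rw [hcv, hcv, heq, Finset.inter_self] at h2
      exact Finset.singleton_ne_empty _ h2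
    obtain ⟨a0, ha0⟩ := hAne
    have key : ∀ v : V, (v ∈ A ↔ c a0 = c v) := by
      intro v
      have := walk_key G A B hcov hA hB c hc a0 v ((hconn a0 v).some)
      tauto
    have hvals : ∀ x : Fin 2, x ≠ 0 → x = 1 := by decide
    have hvals' : ∀ x : Fin 2, x ≠ 1 → x = 0 := by decide
    by_cases h0 : c a0 = 0
    · left
      funext v
      rw [hcv v]
      by_cases hv : v ∈ A
      · rw [if_pos hv, ← (key v).mp hv, h0]
      · rw [if_neg hv]
        have hne : c a0 ≠ c v := fun h => hv ((key v).mpr h)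
        rw [hvals (c v) (by rw [← h0]; exact fun h => hne h.symm)]
    · right
      funext v
      rw [hcv v]
      have h1 : c a0 = 1 := hvals _ h0
      by_cases hv : v ∈ A
      · rw [if_pos hv, ← (key v).mp hv, h1]
      · rw [if_neg hv]
        have hne : c a0 ≠ c v := fun h => hv ((key v).mpr h)
        rw [hvals' (c v) (fun h => hne (h1.trans h.symm))]
  · have h01 : ({0} : Finset (Fin 2)) ∩ {1} = ∅ := by decide
    have h10 : ({1} : Finset (Fin 2)) ∩ {0} = ∅ := by decide
    rintro (h | h) <;> subst h <;>
      refine ⟨fun v => by by_cases hv : v ∈ A <;> simp [hv], fun u v huv => ?_⟩ <;>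
      · have := hone u v huv
        by_cases hu : u ∈ A <;> by_cases hv : v ∈ A <;>
          simp only [hu, hv, if_true, if_false] <;>
          first | tauto | exact h01 | exact h10

private lemma finsum_cond_pair {M : Type*} [AddCommMonoid M] {α : Type*} (f : α → M)
    (p : α → Prop) (a b : α) (hne : a ≠ b)
    (h : p = fun x => x ∈ ({a, b} : Set α)) :
    ∑ᶠ x : Subtype p, f x = f a + f b := by
  subst h
  rw [finsum_subtype_eq_finsum_cond]
  exact finsum_mem_pair hne

/-- (1) For a finite connected bipartite simple graph `G` whose (unique) bipartition
has parts `A`, `B` of sizes `k ≥ l ≥ 1`, the two-variable chromatic symmetric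
function `X_G(x₁,x₂)` is 2-s-positive if and only if `k ≤ l + 1` (equivalently, it
is not 2-s-positive iff `k ≥ l + 2`).  (2) For any finite non-bipartite simple graph
`H`, `X_H(x₁,x₂) = 0`, so all its two-row Schur coefficients vanish. -/
theorem bipartite_Xpoly_twoSPos_iff_balanced :
    (∀ (V : Type) [Fintype V] [DecidableEq V] (G : SimpleGraph V)
        (A B : Finset V) (k l : ℕ),
      G.Connected → (∀ v : V, v ∈ A ∪ B) → Disjoint A B →
      (∀ u ∈ A, ∀ w ∈ A, ¬ G.Adj u w) → (∀ u ∈ B, ∀ w ∈ B, ¬ G.Adj u w) →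
      A.card = k → B.card = l → 1 ≤ l → l ≤ k →
      (TwoSPos (Xpoly G fun _ => 1) ↔ k ≤ l + 1)) ∧
    (∀ (W : Type) [Fintype W] (H : SimpleGraph W), ¬ H.Colorable 2 →
      Xpoly H (fun _ => 1) = 0 ∧
        ∀ a b : ℕ, b ≤ a → schurCoeff (Xpoly H fun _ => 1) a b = 0) := by
  constructor
  · intro V _ _ G A B k l hconn hcov hdisj hA hB hk hl h1l hlk
    have hAne : A.Nonempty := Finset.card_pos.mp (by omega)
    have hset := colorings_classified G A B hconn hcov hdisj hA hB hAne
    set κ0 : V → Finset (Fin 2) := fun v => if v ∈ A then {0} else {1} with hκ0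
    set κ1 : V → Finset (Fin 2) := fun v => if v ∈ A then {1} else {0} with hκ1
    have hne : κ0 ≠ κ1 := by
      obtain ⟨a0, ha0⟩ := hAne
      intro h
      have h' := congrFun h a0
      simp only [hκ0, hκ1, if_pos ha0] at h'
      exact absurd h' (by decide)
    have hnotA : ∀ v, v ∉ A → v ∈ B := by
      intro v hv
      have := hcov v
      simp only [Finset.mem_union] at this
      tauto
    have hAB : ∀ v, v ∈ A → v ∉ B := fun v hv => Finset.disjoint_left.mp hdisj hv
    have f00 : (Finset.univ.filter fun v => (0 : Fin 2) ∈ κ0 v) = A := by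
      ext v
      by_cases hv : v ∈ A <;> simp [hκ0, hv]
    have f10 : (Finset.univ.filter fun v => (1 : Fin 2) ∈ κ0 v) = B := by
      ext v
      by_cases hv : v ∈ A <;> simp [hκ0, hv, hAB v, hnotA v]
    have f01 : (Finset.univ.filter fun v => (0 : Fin 2) ∈ κ1 v) = B := by
      ext v
      by_cases hv : v ∈ A <;> simp [hκ1, hv, hAB v, hnotA v]
    have f11 : (Finset.univ.filter fun v => (1 : Fin 2) ∈ κ1 v) = A := by
      ext v
      by_cases hv : v ∈ A <;> simp [hκ1, hv]
    have hX : Xpoly G (fun _ => 1) =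
        (X 0 : MvPolynomial (Fin 2) ℤ)^k * X 1^l + X 0^l * X 1^k := by
      have hpeq : (ProperMulti G (fun _ => 1) : (V → Finset (Fin 2)) → Prop)
          = fun κ => κ ∈ ({κ0, κ1} : Set (V → Finset (Fin 2))) := by
        funext κ
        rw [← hset]
        rfl
      unfold Xpoly
      rw [finsum_cond_pair
            (fun κ : V → Finset (Fin 2) =>
              (X 0 : MvPolynomial (Fin 2) ℤ)
                  ^ (Finset.univ.filter fun v => (0 : Fin 2) ∈ κ v).card *
                X 1 ^ (Finset.univ.filter fun v => (1 : Fin 2) ∈ κ v).card)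
            (ProperMulti G fun _ => 1) κ0 κ1 hne hpeq]
      simp only [f00, f10, f01, f11, hk, hl]
    rw [hX]
    exact twoSPos_iff_aux k l h1l hlk
  · intro W _ H hcol
    have hempty : IsEmpty {κ : W → Finset (Fin 2) // ProperMulti H (fun _ => 1) κ} := by
      refine ⟨fun κp => ?_⟩
      obtain ⟨κ, hκ⟩ := κp
      have hc1 : ∀ v, ∃ a, κ v = {a} := fun v => Finset.card_eq_one.mp (hκ.1 v)
      choose c hcv using hc1
      have hproper : ∀ {u v : W}, H.Adj u v → c u ≠ c v := by
        intro u v huv heq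
        have h2 := hκ.2 u v huv
        rw [hcv, hcv, heq, Finset.inter_self] at h2
        exact Finset.singleton_ne_empty _ h2
      exact hcol (by simpa using (SimpleGraph.Coloring.mk c hproper).colorable)
    have hz : Xpoly H (fun _ => 1) = 0 := by
      unfold Xpoly
      exact finsum_of_isEmpty _
    refine ⟨hz, fun a b _ => ?_⟩
    rw [hz]
    simp [schurCoeff]
end
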